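/- The function F(z) = z₂/√(1 + z₃ - z₁z₂) maps the tetrablock 𝔼 into the open unit disc 𝔻, where the square root is the principal branch (note Re(1 + z₃ - z₁z₂) > 0 for z ∈ 𝔼). -/

import Mathlib

open Complex

def tetrablock : Set (ℂ × ℂ × ℂ) :=
  {z | ‖z.1 - (starRingEnd ℂ) z.2.1 * z.2.2‖ +
       ‖z.2.1 - (starRingEnd ℂ) z.1 * z.2.2‖ +
       (‖z.2.2‖) ^ 2 < 1}

/-!
Write `β₁ = z₁ - z̄₂z₃`, `β₂ = z₂ - z̄₁z₃`, so that `z ∈ 𝔼` means `‖β₁‖ + ‖β₂‖ < 1 - ‖z₃‖²`.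
Two identities, `(1 - ‖z₃‖²) z₁ = β₁ + β̄₂ z₃` and
`‖β₁‖² = ‖z₁z₂ - z₃‖² + (1 - ‖z₂‖²)(‖z₁‖² - ‖z₃‖²)` (and their mirror images), turn this into
`‖z₁‖² + ‖z₂‖² + 2‖z₁z₂ - z₃‖ < 1 + ‖z₃‖²`: this says that the symmetric matrix
`A = [[z₁, w], [w, z₂]]` with `w² = z₁z₂ - z₃` satisfies `tr (1 - A*A) > 0` and `det (1 - A*A) > 0`,
i.e. is a strict contraction. Its second column then has norm `< 1`, i.e.
`‖z₂‖² + ‖z₁z₂ - z₃‖ < 1`. Hence `1 + z₃ - z₁z₂` has real part and modulus larger than `‖z₂‖²`.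
-/

open ComplexConjugate

namespace Complex

lemma one_sub_sq_norm_mul_eq (z₁ z₂ z₃ : ℂ) :
    ((1 - ‖z₃‖ ^ 2 : ℝ) : ℂ) * z₁ = z₁ - conj z₂ * z₃ + conj (z₂ - conj z₁ * z₃) * z₃ := by
  push_cast
  rw [← mul_conj' z₃, map_sub, map_mul, conj_conj]
  ring

lemma norm_mul_one_sub_sq_norm_le (z₁ z₂ z₃ : ℂ) :
    ‖z₁‖ * (1 - ‖z₃‖ ^ 2) ≤ ‖z₁ - conj z₂ * z₃‖ + ‖z₂ - conj z₁ * z₃‖ * ‖z₃‖ := by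
  calc ‖z₁‖ * (1 - ‖z₃‖ ^ 2) ≤ ‖z₁‖ * ‖1 - ‖z₃‖ ^ 2‖ := by
        gcongr
        exact Real.le_norm_self _
    _ = ‖((1 - ‖z₃‖ ^ 2 : ℝ) : ℂ) * z₁‖ := by rw [norm_mul, norm_real, mul_comm]
    _ ≤ _ := by
        rw [one_sub_sq_norm_mul_eq]
        refine (norm_add_le _ _).trans_eq ?_
        rw [norm_mul, norm_conj]

lemma sq_norm_sub_conj_mul (z₁ z₂ z₃ : ℂ) :
    ‖z₁ - conj z₂ * z₃‖ ^ 2 =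
      ‖z₁ * z₂ - z₃‖ ^ 2 + (1 - ‖z₂‖ ^ 2) * (‖z₁‖ ^ 2 - ‖z₃‖ ^ 2) := by
  simp only [Complex.sq_norm, normSq_apply, mul_re, mul_im, sub_re, sub_im, conj_re, conj_im]
  ring

lemma norm_cpow_one_div_two (w : ℂ) : ‖w ^ ((1 : ℂ) / 2)‖ = √‖w‖ := by
  have : (1 : ℂ) / 2 = ((1 / 2 : ℝ) : ℂ) := by push_cast; rfl
  rw [this, norm_cpow_real, Real.sqrt_eq_rpow]

end Complex

lemma sq_add_sq_lt_one_add_sq {a b c x y : ℝ} (ha : 0 ≤ a) (hb : 0 ≤ b)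
    (hx : 0 ≤ x) (hy : 0 ≤ y) (habc : a + b < 1 - c ^ 2)
    (hxa : x * (1 - c ^ 2) ≤ a + b * c) (hyb : y * (1 - c ^ 2) ≤ b + a * c) :
    x ^ 2 + y ^ 2 < 1 + c ^ 2 := by
  have hc2 : 0 < 1 - c ^ 2 := by linarith
  -- `4abc ≤ 2ab(1 + c²)` makes the right-hand side below `(a + b)²(1 + c²)`
  have key : (x ^ 2 + y ^ 2) * (1 - c ^ 2) ^ 2 < (1 + c ^ 2) * (1 - c ^ 2) ^ 2 :=
    calc (x ^ 2 + y ^ 2) * (1 - c ^ 2) ^ 2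
        ≤ (a + b * c) ^ 2 + (b + a * c) ^ 2 := by
          have := pow_le_pow_left₀ (by positivity) hxa 2
          have := pow_le_pow_left₀ (by positivity) hyb 2
          nlinarith
      _ ≤ (1 + c ^ 2) * (a + b) ^ 2 := by
          nlinarith [mul_nonneg (mul_nonneg ha hb) (sq_nonneg (1 - c))]
      _ < (1 + c ^ 2) * (1 - c ^ 2) ^ 2 := by gcongr
  exact lt_of_mul_lt_mul_right key (by positivity)

lemma sq_add_sq_add_two_mul_lt {a b c r x y : ℝ} (ha : 0 ≤ a) (hb : 0 ≤ b)
    (habc : a + b < 1 - c ^ 2) (hxy : x ^ 2 + y ^ 2 < 1 + c ^ 2)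
    (ha2 : a ^ 2 = r ^ 2 + (1 - y ^ 2) * (x ^ 2 - c ^ 2))
    (hb2 : b ^ 2 = r ^ 2 + (1 - x ^ 2) * (y ^ 2 - c ^ 2)) :
    x ^ 2 + y ^ 2 + 2 * r < 1 + c ^ 2 := by
  set D := 1 + c ^ 2 - x ^ 2 - y ^ 2
  set K := (1 - c ^ 2) ^ 2 - a ^ 2 - b ^ 2
  have hfactor : (1 - c ^ 2) ^ 2 * (D ^ 2 - (2 * r) ^ 2) = (K - 2 * a * b) * (K + 2 * a * b) := by
    rw [show (K - 2 * a * b) * (K + 2 * a * b) = K ^ 2 - 4 * a ^ 2 * b ^ 2 by ring]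
    simp only [D, K]
    rw [ha2, hb2]
    ring
  have hK : 0 < (K - 2 * a * b) * (K + 2 * a * b) := by
    apply mul_pos <;> nlinarith
  have hD : 2 * r < D :=
    lt_of_pow_lt_pow_left₀ 2 (by simp only [D]; linarith) (by nlinarith)
  simp only [D] at hD
  linarith

lemma sq_add_lt_one_of_sq_add_sq_add_two_mul_lt {c r x y : ℝ} (hc : 0 ≤ c) (hr : 0 ≤ r)
    (hc1 : c ≤ 1) (hcxy : c ≤ x * y + r) (h : x ^ 2 + y ^ 2 + 2 * r < 1 + c ^ 2) :
    y ^ 2 + r < 1 := by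
  -- `1 - x² - r` and `1 - y² - r` are the diagonal entries of `1 - A*A`
  have hprod : 0 < (1 - x ^ 2 - r) * (1 - y ^ 2 - r) := by
    have : c ^ 2 ≤ (x * y + r) ^ 2 := pow_le_pow_left₀ hc hcxy 2
    nlinarith [mul_nonneg hr (sq_nonneg (x - y))]
  have hsum : 0 < (1 - x ^ 2 - r) + (1 - y ^ 2 - r) := by nlinarith
  rcases mul_pos_iff.mp hprod with ⟨-, hy⟩ | ⟨hx, hy⟩ <;> linarith

lemma mem_tetrablock {z₁ z₂ z₃ : ℂ} :
    (z₁, z₂, z₃) ∈ tetrablock ↔ ‖z₁ - conj z₂ * z₃‖ + ‖z₂ - conj z₁ * z₃‖ + ‖z₃‖ ^ 2 < 1 :=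
  Iff.rfl

lemma sq_norm_add_norm_mul_sub_lt_one_of_mem_tetrablock {z₁ z₂ z₃ : ℂ}
    (hz : (z₁, z₂, z₃) ∈ tetrablock) : ‖z₂‖ ^ 2 + ‖z₁ * z₂ - z₃‖ < 1 := by
  rw [mem_tetrablock] at hz
  have hc1 : ‖z₃‖ ≤ 1 := by
    nlinarith [norm_nonneg (z₁ - conj z₂ * z₃), norm_nonneg (z₂ - conj z₁ * z₃), norm_nonneg z₃]
  have hxy := sq_add_sq_lt_one_add_sq (norm_nonneg _) (norm_nonneg _)
    (norm_nonneg z₁) (norm_nonneg z₂) (by linarith)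
    (norm_mul_one_sub_sq_norm_le z₁ z₂ z₃) (norm_mul_one_sub_sq_norm_le z₂ z₁ z₃)
  have hxyr := sq_add_sq_add_two_mul_lt (norm_nonneg (z₁ - conj z₂ * z₃))
    (norm_nonneg (z₂ - conj z₁ * z₃)) (by linarith) hxy (sq_norm_sub_conj_mul z₁ z₂ z₃)
    (by rw [sq_norm_sub_conj_mul, mul_comm z₂])
  refine sq_add_lt_one_of_sq_add_sq_add_two_mul_lt (norm_nonneg _) (norm_nonneg _) hc1 ?_ hxyr
  calc ‖z₃‖ = ‖z₁ * z₂ - (z₁ * z₂ - z₃)‖ := by rw [sub_sub_cancel]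
    _ ≤ ‖z₁‖ * ‖z₂‖ + ‖z₁ * z₂ - z₃‖ := by grw [norm_sub_le, norm_mul]

theorem stmt16 (z : ℂ × ℂ × ℂ) (hz : z ∈ tetrablock) :
    0 < (1 + z.2.2 - z.1 * z.2.1).re ∧
    ‖z.2.1 / (1 + z.2.2 - z.1 * z.2.1) ^ ((1 : ℂ) / 2)‖ < 1 := by
  obtain ⟨z₁, z₂, z₃⟩ := z
  have hcol := sq_norm_add_norm_mul_sub_lt_one_of_mem_tetrablock hz
  have hre : ‖z₂‖ ^ 2 < (1 + z₃ - z₁ * z₂).re := by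
    have := re_le_norm (z₁ * z₂ - z₃)
    simp only [add_re, sub_re, one_re] at this ⊢
    linarith
  refine ⟨(sq_nonneg _).trans_lt hre, ?_⟩
  have hnorm : ‖z₂‖ ^ 2 < ‖1 + z₃ - z₁ * z₂‖ := hre.trans_le (re_le_norm _)
  have hpos : 0 < √‖1 + z₃ - z₁ * z₂‖ := Real.sqrt_pos.2 ((sq_nonneg _).trans_lt hnorm)
  rw [norm_div, norm_cpow_one_div_two, div_lt_one hpos, Real.lt_sqrt (norm_nonneg _)]
  exact hnorm
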